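/- The complex linear span of the six matrices B^id₁, B^id₂, B^sgn, B^ζ1, B^ζ2₁, B^ζ2₂ is a 6-dimensional Lie subalgebra of 𝔏_GM (closed under the commutator [X,Y] = XY − YX) which is invariant under the conjugation action Q ↦ K_σ Q K_σ⁻¹ for every σ ∈ 𝒢. (This is Model 6.6; permuting rows and columns according to the transposition (34) yields the strand-symmetric model.) -/

import Mathlib

open Matrix

noncomputable section

/-- The elementary rate matrix `L_ij`: entry 1 at `(i,j)`, entry −1 at `(j,j)`, 0 elsewhere. -/
def Lmat (i j : Fin 4) : Matrix (Fin 4) (Fin 4) ℂ :=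
  Matrix.single i j 1 - Matrix.single j j 1

/-- `𝔏_GM`: the 4×4 complex matrices each of whose columns sums to zero. -/
def LGMset : Set (Matrix (Fin 4) (Fin 4) ℂ) :=
  {Q | ∀ j, ∑ i, Q i j = 0}

/-- The permutation matrix `K_σ`, with entry 1 in position `(σ j, j)` for each `j`. -/
def Kmat (σ : Equiv.Perm (Fin 4)) : Matrix (Fin 4) (Fin 4) ℂ :=
  Matrix.of fun i j => if i = σ j then 1 else 0

/-- The permutation vector `P_σ := K_σ − I`. -/
def Pmat (σ : Equiv.Perm (Fin 4)) : Matrix (Fin 4) (Fin 4) ℂ :=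
  Kmat σ - 1

/-- The 4-cycle (1324) (on `{1,2,3,4}`, i.e. `0 ↦ 2 ↦ 1 ↦ 3 ↦ 0` on `Fin 4`). -/
def c1324 : Equiv.Perm (Fin 4) := Equiv.swap 0 3 * Equiv.swap 0 1 * Equiv.swap 0 2

/-- The 4-cycle (1423) (on `{1,2,3,4}`, i.e. `0 ↦ 3 ↦ 1 ↦ 2 ↦ 0` on `Fin 4`). -/
def c1423 : Equiv.Perm (Fin 4) := Equiv.swap 0 2 * Equiv.swap 0 1 * Equiv.swap 0 3

/-- The group 𝒢 = {e, (12), (34), (12)(34), (13)(24), (14)(23), (1324), (1423)},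
presented as a list of its eight elements. -/
def Glist : List (Equiv.Perm (Fin 4)) :=
  [1, Equiv.swap 0 1, Equiv.swap 2 3, Equiv.swap 0 1 * Equiv.swap 2 3,
   Equiv.swap 0 2 * Equiv.swap 1 3, Equiv.swap 0 3 * Equiv.swap 1 2, c1324, c1423]

/-- The cherry vector `Q₁₂ = L₁₃ + L₁₄ + L₂₃ + L₂₄` (1-based indices). -/
def Qc12 : Matrix (Fin 4) (Fin 4) ℂ := Lmat 0 2 + Lmat 0 3 + Lmat 1 2 + Lmat 1 3

/-- The cherry vector `Q₃₄ = L₃₁ + L₃₂ + L₄₁ + L₄₂` (1-based indices). -/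
def Qc34 : Matrix (Fin 4) (Fin 4) ℂ := Lmat 2 0 + Lmat 2 1 + Lmat 3 0 + Lmat 3 1

def Bid1 : Matrix (Fin 4) (Fin 4) ℂ := Pmat (Equiv.swap 0 1 * Equiv.swap 2 3)
def Bid2 : Matrix (Fin 4) (Fin 4) ℂ :=
  Pmat (Equiv.swap 0 2 * Equiv.swap 1 3) + Pmat (Equiv.swap 0 3 * Equiv.swap 1 2)
def Bsgn : Matrix (Fin 4) (Fin 4) ℂ :=
  Pmat (Equiv.swap 0 2 * Equiv.swap 1 3) - Pmat (Equiv.swap 0 3 * Equiv.swap 1 2)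
def Bzeta1 : Matrix (Fin 4) (Fin 4) ℂ := Pmat c1324 - Pmat c1423
def Bzeta2_1 : Matrix (Fin 4) (Fin 4) ℂ := Pmat (Equiv.swap 0 1) - Pmat (Equiv.swap 2 3)
def Bzeta2_2 : Matrix (Fin 4) (Fin 4) ℂ := Qc12 - Qc34

/-- The span of the six matrices of Model 6.6. -/
def model66 : Submodule ℂ (Matrix (Fin 4) (Fin 4) ℂ) :=
  Submodule.span ℂ
    ({Bid1, Bid2, Bsgn, Bzeta1, Bzeta2_1, Bzeta2_2} : Set (Matrix (Fin 4) (Fin 4) ℂ))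

/-!
All six generators have integer entries, so every identity the theorem needs (column sums, the
bracket table, the action of `𝒢`) is an identity between `4 × 4` integer matrices, decided over `ℤ`
and transported to `ℂ` along the cast. Closure under brackets and under conjugation reduce to the
generators by bilinearity and linearity; conjugation by `K_σ` permutes rows and columns by `σ`,
and every generator is mapped to plus or minus itself by each `σ ∈ 𝒢`. For the dimension, six
entries of a vanishing linear combination of the generators already force its coefficients to
vanish.
-/

open Submodule Set

theorem Submodule.mul_sub_mul_mem_span_range {R A ι : Type*} [CommRing R] [Ring A] [Algebra R A]
    [LinearOrder ι] {b : ι → A} (h : ∀ i j, i < j → b i * b j - b j * b i ∈ span R (range b))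
    {x y : A} (hx : x ∈ span R (range b)) (hy : y ∈ span R (range b)) :
    x * y - y * x ∈ span R (range b) := by
  have hb : ∀ i j, b i * b j - b j * b i ∈ span R (range b) := by
    intro i j
    rcases lt_trichotomy i j with hij | rfl | hji
    · exact h i j hij
    · simp
    · rw [← neg_sub]
      exact neg_mem (h j i hji)
  let commutator : A →ₗ[R] A →ₗ[R] A := LinearMap.mul R A - (LinearMap.mul R A).flip
  have hle : map₂ commutator (span R (range b)) (span R (range b)) ≤ span R (range b) := by
    rw [map₂_span_span, span_le]
    rintro _ ⟨_, ⟨i, rfl⟩, _, ⟨j, rfl⟩, rfl⟩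
    exact hb i j
  exact map₂_le.mp hle x hx y hy

theorem Submodule.apply_mem_span_range {R M ι : Type*} [Semiring R] [AddCommMonoid M] [Module R M]
    {f : M →ₗ[R] M} {b : ι → M} (h : ∀ i, f (b i) ∈ span R (range b)) {x : M}
    (hx : x ∈ span R (range b)) : f x ∈ span R (range b) :=
  (span_le (p := (span R (range b)).comap f)).mpr (range_subset_iff.mpr h) hx

theorem Kmat_eq_permMatrix (σ : Equiv.Perm (Fin 4)) : Kmat σ = σ⁻¹.permMatrix ℂ := by
  ext i j
  simp [Kmat, PEquiv.toMatrix_apply, Equiv.eq_symm_apply, eq_comm]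

theorem Kmat_mul_mul_inv_eq_submatrix (σ : Equiv.Perm (Fin 4)) (Q : Matrix (Fin 4) (Fin 4) ℂ) :
    Kmat σ * Q * (Kmat σ)⁻¹ = Q.submatrix ⇑σ⁻¹ ⇑σ⁻¹ := by
  have hinv : (Kmat σ)⁻¹ = σ.permMatrix ℂ :=
    inv_eq_right_inv <| by simp [Kmat_eq_permMatrix, ← permMatrix_mul]
  rw [hinv, Kmat_eq_permMatrix, PEquiv.toMatrix_toPEquiv_mul, PEquiv.mul_toMatrix_toPEquiv]
  rfl

def rateMatrices : Submodule ℂ (Matrix (Fin 4) (Fin 4) ℂ) where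
  carrier := LGMset
  add_mem' ha hb j := by simp [Finset.sum_add_distrib, ha j, hb j]
  zero_mem' j := by simp
  smul_mem' c _ ha j := by simp [← Finset.mul_sum, ha j]

local notation "ι" => RingHom.mapMatrix (m := Fin 4) (Int.castRingHom ℂ)

theorem Kmat_eq_map (σ : Equiv.Perm (Fin 4)) : Kmat σ = ι (σ⁻¹.permMatrix ℤ) := by
  ext i j
  simp [Kmat_eq_permMatrix, PEquiv.toMatrix_apply]

theorem Lmat_eq_map (i j : Fin 4) : Lmat i j = ι (single i j 1 - single j j 1) := by
  rw [map_sub, RingHom.mapMatrix_apply, RingHom.mapMatrix_apply, map_single, map_single, map_one]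
  rfl

namespace Model66

def gen : Fin 6 → Matrix (Fin 4) (Fin 4) ℂ := ![Bid1, Bid2, Bsgn, Bzeta1, Bzeta2_1, Bzeta2_2]

def genℤ : Fin 6 → Matrix (Fin 4) (Fin 4) ℤ :=
  ![!![-1, 1, 0, 0; 1, -1, 0, 0; 0, 0, -1, 1; 0, 0, 1, -1],
    !![-2, 0, 1, 1; 0, -2, 1, 1; 1, 1, -2, 0; 1, 1, 0, -2],
    !![0, 0, 1, -1; 0, 0, -1, 1; 1, -1, 0, 0; -1, 1, 0, 0],
    !![0, 0, -1, 1; 0, 0, 1, -1; 1, -1, 0, 0; -1, 1, 0, 0],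
    !![-1, 1, 0, 0; 1, -1, 0, 0; 0, 0, 1, -1; 0, 0, -1, 1],
    !![2, 0, 1, 1; 0, 2, 1, 1; -1, -1, -2, 0; -1, -1, 0, -2]]

theorem gen_eq_map (i : Fin 6) : gen i = ι (genℤ i) := by
  fin_cases i <;>
    simp only [gen, Bid1, Bid2, Bsgn, Bzeta1, Bzeta2_1, Bzeta2_2, Pmat, Qc12, Qc34,
      Kmat_eq_map, Lmat_eq_map, ← map_one ι, ← map_add, ← map_sub]
    <;> exact congrArg ι (by decide)

theorem model66_eq_span : model66 = span ℂ (range gen) := by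
  simp only [model66, gen, Matrix.range_cons, Matrix.range_empty, Set.union_empty,
    Set.singleton_union]

theorem linearIndependent_gen : LinearIndependent ℂ gen := by
  rw [Fintype.linearIndependent_iff]
  intro c hc
  have entry (p q : Fin 4) : ∑ i, c i * (genℤ i p q : ℂ) = 0 := by
    simpa [Matrix.sum_apply, gen_eq_map] using congr_fun₂ hc p q
  simp only [Fin.sum_univ_six] at entry
  have e01 : c 0 + c 4 = 0 := by simpa [genℤ] using entry 0 1
  have e23 : c 0 - c 4 = 0 := by simpa [genℤ, ← sub_eq_add_neg] using entry 2 3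
  have e02 : c 1 + c 2 - c 3 + c 5 = 0 := by simpa [genℤ, ← sub_eq_add_neg] using entry 0 2
  have e03 : c 1 - c 2 + c 3 + c 5 = 0 := by simpa [genℤ, ← sub_eq_add_neg] using entry 0 3
  have e20 : c 1 + c 2 + c 3 - c 5 = 0 := by simpa [genℤ, ← sub_eq_add_neg] using entry 2 0
  have e21 : c 1 - c 2 - c 3 - c 5 = 0 := by simpa [genℤ, ← sub_eq_add_neg] using entry 2 1
  intro i
  fin_cases i <;> simp only [Fin.reduceFinMk, Fin.isValue]
  · linear_combination (e01 + e23) / 2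
  · linear_combination (e02 + e03 + e20 + e21) / 4
  · linear_combination (e02 - e03 + e20 - e21) / 4
  · linear_combination (-e02 + e03 + e20 - e21) / 4
  · linear_combination (e01 - e23) / 2
  · linear_combination (e02 + e03 - e20 - e21) / 4

theorem gen_mem_LGMset (i : Fin 6) : gen i ∈ LGMset := by
  have hℤ : ∀ i j, ∑ k, genℤ i k j = 0 := by decide
  intro j
  simp only [gen_eq_map, RingHom.mapMatrix_apply, map_apply, Int.coe_castRingHom]
  exact_mod_cast hℤ i j

/-- For `i < j`, the coefficients of `genℤ i * genℤ j - genℤ j * genℤ i` in the generators;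
the pairs not listed commute. -/
def structConst : Fin 6 → Fin 6 → Fin 6 → ℤ
  | 1, 5 => ![0, 0, 0, 0, -4, -4]
  | 2, 3 => ![0, 0, 0, 0, -4, 0]
  | 2, 4 => ![0, 0, 0, -4, 0, 0]
  | 2, 5 => ![0, 0, 0, 4, 0, 0]
  | 3, 4 => ![0, 0, -4, 0, 0, 0]
  | 3, 5 => ![0, 0, 4, 0, 0, 0]
  | _, _ => 0

theorem genℤ_mul_sub_mul : ∀ i j, i < j →
    genℤ i * genℤ j - genℤ j * genℤ i = ∑ k, structConst i j k • genℤ k := by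
  decide

theorem gen_mul_sub_mul_mem_span (i j : Fin 6) (hij : i < j) :
    gen i * gen j - gen j * gen i ∈ span ℂ (range gen) := by
  rw [gen_eq_map, gen_eq_map, ← map_mul, ← map_mul, ← map_sub, genℤ_mul_sub_mul i j hij, map_sum]
  refine sum_mem fun k _ => ?_
  rw [map_zsmul, ← gen_eq_map]
  exact zsmul_mem (subset_span (mem_range_self k)) _

theorem submatrix_genℤ_eq_or_eq_neg :
    ∀ σ ∈ Glist, ∀ i, (genℤ i).submatrix ⇑σ⁻¹ ⇑σ⁻¹ = genℤ i ∨
      (genℤ i).submatrix ⇑σ⁻¹ ⇑σ⁻¹ = -genℤ i := by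
  decide +kernel

theorem submatrix_gen_mem_span {σ : Equiv.Perm (Fin 4)} (hσ : σ ∈ Glist) (i : Fin 6) :
    (gen i).submatrix ⇑σ⁻¹ ⇑σ⁻¹ ∈ span ℂ (range gen) := by
  have hi : gen i ∈ span ℂ (range gen) := subset_span (mem_range_self i)
  have hmap : (gen i).submatrix ⇑σ⁻¹ ⇑σ⁻¹ = ι ((genℤ i).submatrix ⇑σ⁻¹ ⇑σ⁻¹) := by
    rw [gen_eq_map]
    rfl
  rw [hmap]
  rcases submatrix_genℤ_eq_or_eq_neg σ hσ i with h | h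
  · rwa [h, ← gen_eq_map]
  · rw [h, map_neg, ← gen_eq_map]
    exact neg_mem hi

end Model66

open Model66

theorem model_6_6_strand_symmetric :
    Module.finrank ℂ ↥model66 = 6 ∧
    ((model66 : Set (Matrix (Fin 4) (Fin 4) ℂ)) ⊆ LGMset) ∧
    (∀ X ∈ model66, ∀ Y ∈ model66, X * Y - Y * X ∈ model66) ∧
    (∀ σ ∈ Glist, ∀ Q ∈ model66, Kmat σ * Q * (Kmat σ)⁻¹ ∈ model66) := by
  rw [model66_eq_span]
  refine ⟨?_, ?_, ?_, ?_⟩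
  · rw [finrank_span_eq_card linearIndependent_gen, Fintype.card_fin]
  · exact span_le (p := rateMatrices).mpr (range_subset_iff.mpr gen_mem_LGMset)
  · intro X hX Y hY
    exact mul_sub_mul_mem_span_range gen_mul_sub_mul_mem_span hX hY
  · intro σ hσ Q hQ
    rw [Kmat_mul_mul_inv_eq_submatrix]
    exact apply_mem_span_range (f := (reindexLinearEquiv ℂ ℂ σ σ).toLinearMap)
      (submatrix_gen_mem_span hσ) hQ
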